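/- arXiv:1703.10954 — 2 statements merged into one kernel-verified Lean document; each statement's English description precedes it below -/
import Mathlib

section
/- Let Λ be a full-rank lattice in ℝ^d, let H' be an affine hyperplane, let R be a bounded subset of H', and let C > 0. Then there is a constant A such that for every positive integer k, the number of points of (1/k)Λ within distance C/k of R is at most A·k^{d−1}. -/
/-!
Multiplying by `k` turns the points of `S` into lattice points `y` within distance `C` of `k • R`.
The integer coordinates `n` of `y` in the basis `b` lie in a box of side `O(k)`, and since
`φ y = ∑ i, n i * φ (b i)` is within `‖φ‖ * C` of `k * c`, they also lie in a slab of bounded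
width. Once all coordinates but one with `φ (b j) ≠ 0` are fixed, the slab leaves `O(1)` choices
for the last one, so there are `O(k ^ (d - 1))` such points.
-/

open Finset

theorem Int.card_le_of_forall_abs_sub_le {s : Finset ℤ} {Q : ℕ}
    (h : ∀ x ∈ s, ∀ y ∈ s, |x - y| ≤ Q) : #s ≤ Q + 1 := by
  rcases s.eq_empty_or_nonempty with rfl | hs
  · simp
  calc #s ≤ #(Icc (s.min' hs) (s.min' hs + Q)) := card_le_card fun x hx => by
        have := abs_le.mp (h x hx _ (s.min'_mem hs))
        exact mem_Icc.mpr ⟨s.min'_le x hx, by linarith⟩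
    _ = Q + 1 := by rw [Int.card_Icc]; omega

section Slab

variable {ι : Type*} [Fintype ι] [DecidableEq ι]

noncomputable def boxSlabPoints (a : ι → ℝ) (t B : ℝ) (L : ℕ) : Finset (ι → ℤ) :=
  {n ∈ Fintype.piFinset fun _ => Icc (-(L : ℤ)) L | |∑ i, n i * a i - t| ≤ B}

variable {a : ι → ℝ} {t B : ℝ} {L : ℕ}

theorem abs_sub_le_of_mem_boxSlabPoints {j : ι} (hj : a j ≠ 0) {n n' : ι → ℤ}
    (hn : n ∈ boxSlabPoints a t B L) (hn' : n' ∈ boxSlabPoints a t B L)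
    (hnn' : ∀ i ≠ j, n i = n' i) : |n j - n' j| ≤ ⌈2 * B / |a j|⌉₊ := by
  have hdiff : ∑ i, (n i : ℝ) * a i - ∑ i, (n' i : ℝ) * a i = (n j - n' j) * a j := by
    rw [← Finset.sum_sub_distrib, Fintype.sum_eq_single j fun i hi => by simp [hnn' i hi]]
    ring
  have hslab : |((n j : ℝ) - n' j) * a j| ≤ 2 * B := by
    rw [← hdiff]
    have := abs_sub_le (∑ i, (n i : ℝ) * a i) t (∑ i, (n' i : ℝ) * a i)
    rw [abs_sub_comm t] at this
    linarith [(mem_filter.mp hn).2, (mem_filter.mp hn').2]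
  rw [abs_mul, ← le_div_iff₀ (abs_pos.mpr hj)] at hslab
  exact_mod_cast hslab.trans (Nat.le_ceil _)

theorem card_boxSlabPoints_le {j : ι} (hj : a j ≠ 0) :
    #(boxSlabPoints a t B L) ≤ (⌈2 * B / |a j|⌉₊ + 1) * (2 * L + 1) ^ (Fintype.card ι - 1) := by
  set T := boxSlabPoints a t B L
  let res : (ι → ℤ) → ({i // i ≠ j} → ℤ) := fun n i => n i
  have hfiber : ∀ m ∈ T.image res, #{n ∈ T | res n = m} ≤ ⌈2 * B / |a j|⌉₊ + 1 := by
    intro m _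
    have hinj : Set.InjOn (fun n : ι → ℤ => n j) ↑{n ∈ T | res n = m} := by
      intro n hn n' hn' hjj
      simp only [coe_filter, Set.mem_ofPred_eq] at hn hn'
      funext i
      by_cases hij : i = j
      · subst hij; exact hjj
      · exact (congrFun hn.2 ⟨i, hij⟩).trans (congrFun hn'.2 ⟨i, hij⟩).symm
    rw [← card_image_of_injOn hinj]
    refine Int.card_le_of_forall_abs_sub_le ?_
    simp only [mem_image, mem_filter]
    rintro _ ⟨n, ⟨hn, rfl⟩, rfl⟩ _ ⟨n', ⟨hn', hres⟩, rfl⟩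
    exact abs_sub_le_of_mem_boxSlabPoints hj hn hn' fun i hi => (congrFun hres ⟨i, hi⟩).symm
  have himage : T.image res ⊆ Fintype.piFinset fun _ => Icc (-(L : ℤ)) L := by
    simp only [subset_iff, mem_image, Fintype.mem_piFinset]
    rintro _ ⟨n, hn, rfl⟩ i
    exact Fintype.mem_piFinset.mp (mem_filter.mp hn).1 i
  calc #T ≤ (⌈2 * B / |a j|⌉₊ + 1) * #(T.image res) := card_le_mul_card_image _ _ hfiber
    _ ≤ (⌈2 * B / |a j|⌉₊ + 1) * #(Fintype.piFinset fun _ : {i // i ≠ j} => Icc (-(L : ℤ)) L) := by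
      gcongr
    _ = (⌈2 * B / |a j|⌉₊ + 1) * (2 * L + 1) ^ (Fintype.card ι - 1) := by
      rw [Fintype.card_piFinset, prod_const, Int.card_Icc, card_univ, Fintype.card_subtype_compl,
        Fintype.card_subtype_eq]
      congr 2
      omega

end Slab

namespace Module.Basis

variable {ι E : Type*}

theorem exists_int_repr_of_mem_closure [AddCommGroup E] [Module ℝ E] (b : Basis ι ℝ E) {y : E}
    (hy : y ∈ AddSubgroup.closure (Set.range b)) : ∃ n : ι → ℤ, ∀ i, b.repr y i = n i := by
  rw [← Submodule.span_int_eq_addSubgroupClosure, Submodule.mem_toAddSubgroup,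
    b.mem_span_iff_repr_mem ℤ] at hy
  choose n hn using hy
  exact ⟨n, fun i => (hn i).symm⟩

theorem exists_abs_repr_le [Fintype ι] [NormedAddCommGroup E] [NormedSpace ℝ E]
    (b : Basis ι ℝ E) : ∃ K, 0 ≤ K ∧ ∀ x i, |b.repr x i| ≤ K * ‖x‖ := by
  let e : E →L[ℝ] ι → ℝ := b.equivFunL
  refine ⟨‖e‖, norm_nonneg e, fun x i => ?_⟩
  calc |b.repr x i| = ‖e x i‖ := rfl
    _ ≤ ‖e x‖ := norm_le_pi_norm _ i
    _ ≤ ‖e‖ * ‖x‖ := e.le_opNorm x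

end Module.Basis

theorem mem_boxSlabPoints_of_dist_smul_le {ι E : Type*} [Fintype ι] [DecidableEq ι]
    [NormedAddCommGroup E] [NormedSpace ℝ E] (b : Module.Basis ι ℝ E) {K : ℝ} (hK₀ : 0 ≤ K)
    (hK : ∀ x i, |b.repr x i| ≤ K * ‖x‖) (ψ : E →L[ℝ] ℝ)
    {k : ℕ} (hk : 0 < k) {M C : ℝ} (hC : 0 ≤ C) {r y : E} (hr : ‖r‖ ≤ M)
    (hyr : dist y ((k : ℝ) • r) ≤ C) {n : ι → ℤ} (hn : ∀ i, b.repr y i = n i) :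
    n ∈ boxSlabPoints (fun i => ψ (b i)) (k * ψ r) (‖ψ‖ * C)
      (k * ⌈K * (M + C)⌉₊) := by
  have hk1 : (1 : ℝ) ≤ k := by exact_mod_cast hk
  have hy : ‖y‖ ≤ k * (M + C) :=
    calc ‖y‖ ≤ ‖(k : ℝ) • r‖ + C := by
          linarith [norm_le_norm_add_norm_sub' y ((k : ℝ) • r), dist_eq_norm y ((k : ℝ) • r)]
      _ ≤ k * M + k * C := by rw [norm_smul, Real.norm_natCast]; gcongr; nlinarith
      _ = k * (M + C) := by ring
  refine mem_filter.mpr ⟨Fintype.mem_piFinset.mpr fun i => ?_, ?_⟩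
  · have : |(n i : ℝ)| ≤ k * ⌈K * (M + C)⌉₊ :=
      calc |(n i : ℝ)| ≤ K * ‖y‖ := hn i ▸ hK y i
        _ ≤ K * (k * (M + C)) := by gcongr
        _ = k * (K * (M + C)) := by ring
        _ ≤ k * ⌈K * (M + C)⌉₊ := by gcongr; exact Nat.le_ceil _
    exact mem_Icc.mpr (abs_le.mp (by exact_mod_cast this))
  · have hsum : ∑ i, (n i : ℝ) * ψ (b i) = ψ y := by
      conv_rhs => rw [← b.sum_repr y]
      simp [hn]
    calc |∑ i, (n i : ℝ) * ψ (b i) - k * ψ r| = ‖ψ (y - (k : ℝ) • r)‖ := by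
          rw [hsum, map_sub, map_smul, smul_eq_mul, Real.norm_eq_abs]
      _ ≤ ‖ψ‖ * ‖y - (k : ℝ) • r‖ := ψ.le_opNorm _
      _ ≤ ‖ψ‖ * C := by rw [← dist_eq_norm]; gcongr

theorem subset_image_boxSlabPoints {ι E : Type*} [Fintype ι] [DecidableEq ι]
    [NormedAddCommGroup E] [NormedSpace ℝ E] (b : Module.Basis ι ℝ E) {K : ℝ} (hK₀ : 0 ≤ K)
    (hK : ∀ x i, |b.repr x i| ≤ K * ‖x‖) (ψ : E →L[ℝ] ℝ) {R : Set E} {M c C : ℝ}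
    (hM : R ⊆ Metric.closedBall 0 M) (hR : R ⊆ {x | ψ x = c}) (hC : 0 ≤ C) {k : ℕ} (hk : 0 < k) :
    {x | (∃ y ∈ AddSubgroup.closure (Set.range b), x = (k : ℝ)⁻¹ • y) ∧
        ∃ r ∈ R, dist x r ≤ C / k} ⊆
      (fun n : ι → ℤ => (k : ℝ)⁻¹ • ∑ i, (n i : ℝ) • b i) ''
        (boxSlabPoints (fun i => ψ (b i)) (k * c) (‖ψ‖ * C) (k * ⌈K * (M + C)⌉₊) : Set (ι → ℤ)) := by
  rintro x ⟨⟨y, hy, rfl⟩, r, hr, hxr⟩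
  obtain ⟨n, hn⟩ := b.exists_int_repr_of_mem_closure hy
  have hk₀ : (k : ℝ) ≠ 0 := by positivity
  have hyr : dist y ((k : ℝ) • r) ≤ C := by
    rwa [← smul_inv_smul₀ hk₀ y, dist_smul₀, Real.norm_natCast, ← le_div_iff₀' (by positivity)]
  refine ⟨n, ?_, ?_⟩
  · have hn := mem_boxSlabPoints_of_dist_smul_le b hK₀ hK ψ hk hC
      (mem_closedBall_zero_iff.mp (hM hr)) hyr hn
    rwa [show ψ r = c from hR hr] at hn
  · rw [← b.sum_repr y]
    simp [hn]

/-- For a full-rank lattice `Λ` in `ℝ^d`, a bounded region `R` of an affine hyperplane,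
and `C > 0`, the number of points of `(1/k)Λ` within distance `C/k` of `R` is `O(k^(d-1))`. -/
theorem lattice_points_near_bounded_region (d : ℕ)
    (b : Module.Basis (Fin d) ℝ (EuclideanSpace ℝ (Fin d)))
    (φ : EuclideanSpace ℝ (Fin d) →ₗ[ℝ] ℝ) (hφ : φ ≠ 0) (c : ℝ)
    (R : Set (EuclideanSpace ℝ (Fin d))) (hR : R ⊆ {x | φ x = c})
    (hRbdd : Bornology.IsBounded R) (C : ℝ) (hC : 0 < C) :
    ∃ A : ℝ, ∀ k : ℕ, 0 < k →
      let S : Set (EuclideanSpace ℝ (Fin d)) :=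
        {x | (∃ y ∈ AddSubgroup.closure (Set.range b), x = (k : ℝ)⁻¹ • y) ∧
             ∃ r ∈ R, dist x r ≤ C / k}
      S.Finite ∧ (S.ncard : ℝ) ≤ A * (k : ℝ) ^ (d - 1) := by
  obtain ⟨M, hM⟩ := hRbdd.subset_closedBall 0
  obtain ⟨K, hK₀, hK⟩ := b.exists_abs_repr_le
  obtain ⟨j, hj⟩ : ∃ j, φ (b j) ≠ 0 := by
    by_contra! h
    exact hφ (b.ext fun i => by simpa using h i)
  let ψ := LinearMap.toContinuousLinearMap φ
  set N := ⌈K * (M + C)⌉₊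
  set Q := ⌈2 * (‖ψ‖ * C) / |φ (b j)|⌉₊
  refine ⟨((Q + 1) * (2 * N + 1) ^ (d - 1) : ℕ), fun k hk => ?_⟩
  intro S
  set T := boxSlabPoints (fun i => ψ (b i)) (k * c) (‖ψ‖ * C) (k * N)
  have hST : S ⊆ _ '' (T : Set (Fin d → ℤ)) :=
    subset_image_boxSlabPoints b hK₀ hK ψ hM hR hC.le hk
  refine ⟨(T.finite_toSet.image _).subset hST, ?_⟩
  have hcard : S.ncard ≤ (Q + 1) * (2 * N + 1) ^ (d - 1) * k ^ (d - 1) :=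
    calc S.ncard ≤ #T := (Set.ncard_le_ncard hST (T.finite_toSet.image _)).trans
          ((Set.ncard_image_le T.finite_toSet).trans_eq (Set.ncard_coe_finset T))
      _ ≤ (Q + 1) * (2 * (k * N) + 1) ^ (Fintype.card (Fin d) - 1) := card_boxSlabPoints_le hj
      _ ≤ (Q + 1) * ((2 * N + 1) * k) ^ (d - 1) := by
        rw [Fintype.card_fin]; gcongr; nlinarith
      _ = (Q + 1) * (2 * N + 1) ^ (d - 1) * k ^ (d - 1) := by
        rw [mul_pow, mul_assoc]
  exact_mod_cast hcard
end

section
/- There is no symmetric chain decomposition of the polytope P consisting of the boundary of the unit cube in ℝ³ with the relative interiors of the top face {z = 1, 0 < x,y < 1} and the bottom face {z = 0, 0 < x,y < 1} removed. That is, P cannot be partitioned into symmetric chains. -/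
/-- A closed chain: segments between successive vertices, each difference a positive
multiple of a standard basis vector; an open chain additionally omits the two endpoints.
A chain is symmetric if the ranks (coordinate sums) of its endpoints sum to 3 (the rank
of the polytope below). -/
def IsSymmetricChain3 (Ch : Set (Fin 3 → ℝ)) : Prop :=
  ∃ (k : ℕ) (v : Fin (k + 1) → (Fin 3 → ℝ)),
    (∀ i : Fin k, ∃ (c : ℝ) (j : Fin 3), 0 < c ∧
      v i.succ = v i.castSucc + c • (Pi.single j 1 : Fin 3 → ℝ)) ∧
    (∑ j, v 0 j) + (∑ j, v (Fin.last k) j) = 3 ∧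
    (Ch = {v 0} ∪ ⋃ i : Fin k, segment ℝ (v i.castSucc) (v i.succ) ∨
     Ch = ({v 0} ∪ ⋃ i : Fin k, segment ℝ (v i.castSucc) (v i.succ)) \
            {v 0, v (Fin.last k)})

namespace NoSCD

abbrev Pt := Fin 3 → ℝ

noncomputable def sing (j : Fin 3) : Pt := (Pi.single j (1:ℝ) : Pt)

def rho (x : Pt) : ℝ := x 0 + x 1 + x 2

def Sset : Set Pt :=
  {x | (∀ i, 0 ≤ x i ∧ x i ≤ 1) ∧ (∃ i, x i = 0 ∨ x i = 1) ∧
       ¬((x 2 = 0 ∨ x 2 = 1) ∧ 0 < x 0 ∧ x 0 < 1 ∧ 0 < x 1 ∧ x 1 < 1)}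

structure CD where
  k : ℕ
  V : ℕ → Pt
  cc : ℕ → ℝ
  jj : ℕ → Fin 3
  hpos : ∀ n, n < k → 0 < cc n
  hstep : ∀ n, n < k → V (n+1) = V n + (cc n) • (sing (jj n))

def Cl (D : CD) : Set Pt :=
  {x | x = D.V 0 ∨ ∃ n, n < D.k ∧ ∃ θ : ℝ, 0 ≤ θ ∧ θ ≤ 1 ∧
        x = D.V n + (θ * D.cc n) • (sing (D.jj n))}

lemma coordEq {x u : Pt} {r : ℝ} {j : Fin 3} (h : x = u + r • (sing j)) (m : Fin 3) :
    x m = u m + r * (if m = j then 1 else 0) := by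
  rw [h]; simp [sing, Pi.single_apply]

lemma ite_sum_lam (α : Fin 3 → ℝ) (j : Fin 3) :
    α 0 * (if (0:Fin 3) = j then (1:ℝ) else 0) + α 1 * (if (1:Fin 3) = j then 1 else 0)
      + α 2 * (if (2:Fin 3) = j then 1 else 0) = α j := by
  fin_cases j <;> simp

lemma rho_addSingle {x u : Pt} {r : ℝ} {j : Fin 3} (h : x = u + r • (sing j)) :
    rho x = rho u + r := by
  have h0 := coordEq h 0
  have h1 := coordEq h 1
  have h2 := coordEq h 2
  have key := ite_sum_lam (fun _ => 1) j
  unfold rho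
  rw [h0, h1, h2]; linear_combination r * key

/-- linear functional with nonnegative coefficients -/
def lam (α : Fin 3 → ℝ) (x : Pt) : ℝ := α 0 * x 0 + α 1 * x 1 + α 2 * x 2

lemma lam_addSingle (α : Fin 3 → ℝ) {x u : Pt} {r : ℝ} {j : Fin 3}
    (h : x = u + r • (sing j)) : lam α x = lam α u + r * α j := by
  have h0 := coordEq h 0
  have h1 := coordEq h 1
  have h2 := coordEq h 2
  have key := ite_sum_lam α j
  unfold lam
  rw [h0, h1, h2]; linear_combination r * key

lemma lam_ones (x : Pt) : lam (fun _ => 1) x = rho x := by unfold lam rho; ring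

lemma lam_ind (c : Fin 3) (x : Pt) : lam (fun m => if m = c then 1 else 0) x = x c := by
  unfold lam; fin_cases c <;> simp

lemma lam_mono (α : Fin 3 → ℝ) (hα : ∀ m, 0 ≤ α m) {x y : Pt} (h : ∀ m, x m ≤ y m) :
    lam α x ≤ lam α y := by
  unfold lam
  nlinarith [mul_le_mul_of_nonneg_left (h 0) (hα 0), mul_le_mul_of_nonneg_left (h 1) (hα 1),
    mul_le_mul_of_nonneg_left (h 2) (hα 2)]

lemma rho_mono {x y : Pt} (h : ∀ m, x m ≤ y m) : rho x ≤ rho y := by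
  unfold rho; have := h 0; have := h 1; have := h 2; linarith

lemma eq_of_le_rho {x y : Pt} (h : ∀ m, x m ≤ y m) (hr : rho x = rho y) : x = y := by
  have h0 := h 0; have h1 := h 1; have h2 := h 2
  unfold rho at hr
  have e0 : x 0 = y 0 := by linarith
  have e1 : x 1 = y 1 := by linarith
  have e2 : x 2 = y 2 := by linarith
  funext m
  fin_cases m
  · exact e0
  · exact e1
  · exact e2


section DLemmas
variable (D : CD)

lemma ite_nonneg (a b : Fin 3) : (0:ℝ) ≤ if a = b then 1 else 0 := by split <;> norm_num

lemma V_le {n n' : ℕ} (h : n ≤ n') (hk : n' ≤ D.k) : ∀ m, D.V n m ≤ D.V n' m := by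
  induction n', h using Nat.le_induction with
  | base => intro m; exact le_refl _
  | succ n' hn' ih =>
    intro m
    have hlt : n' < D.k := by omega
    have hc := coordEq (D.hstep n' hlt) m
    have hcc := D.hpos n' hlt
    have hi := ite_nonneg m (D.jj n')
    have := ih (by omega) m
    nlinarith

lemma rep_ge {x : Pt} {n : ℕ} {θ : ℝ} (h0 : 0 ≤ θ)
    (hx : x = D.V n + (θ * D.cc n) • sing (D.jj n)) (hn : n < D.k) : ∀ m, D.V n m ≤ x m := by
  intro m
  have hc := coordEq hx m
  have hcc := D.hpos n hn
  have hi := ite_nonneg m (D.jj n)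
  nlinarith [mul_nonneg (mul_nonneg h0 hcc.le) hi]

lemma rep_le_next {x : Pt} {n : ℕ} {θ : ℝ} (h1 : θ ≤ 1)
    (hx : x = D.V n + (θ * D.cc n) • sing (D.jj n)) (hn : n < D.k) :
    ∀ m, x m ≤ D.V (n+1) m := by
  intro m
  have hc := coordEq hx m
  have hs := coordEq (D.hstep n hn) m
  have hcc := D.hpos n hn
  have hi := ite_nonneg m (D.jj n)
  nlinarith [mul_nonneg (mul_nonneg (sub_nonneg.2 h1) hcc.le) hi]

lemma mem_le_V0 {x : Pt} (hx : x ∈ Cl D) : ∀ m, D.V 0 m ≤ x m := by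
  rcases hx with rfl | ⟨n, hn, θ, h0, h1, hx⟩
  · intro m; exact le_refl _
  · intro m
    exact le_trans (V_le D (Nat.zero_le n) (le_of_lt hn) m) (rep_ge D h0 hx hn m)

lemma mem_le_Vk {x : Pt} (hx : x ∈ Cl D) : ∀ m, x m ≤ D.V D.k m := by
  rcases hx with rfl | ⟨n, hn, θ, h0, h1, hx⟩
  · exact V_le D (Nat.zero_le _) (le_refl _)
  · intro m
    exact le_trans (rep_le_next D h1 hx hn m) (V_le D (by omega) (le_refl _) m)

lemma mem_Cl_of_rep {n : ℕ} {θ : ℝ} (hn : n < D.k) (h0 : 0 ≤ θ) (h1 : θ ≤ 1) :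
    D.V n + (θ * D.cc n) • sing (D.jj n) ∈ Cl D := Or.inr ⟨n, hn, θ, h0, h1, rfl⟩

lemma rep_of_mem {x : Pt} (hk : 1 ≤ D.k) (hx : x ∈ Cl D) :
    ∃ n, n < D.k ∧ ∃ θ : ℝ, 0 ≤ θ ∧ θ ≤ 1 ∧ x = D.V n + (θ * D.cc n) • sing (D.jj n) := by
  rcases hx with rfl | h
  · exact ⟨0, hk, 0, le_refl _, zero_le_one, by simp⟩
  · exact h

lemma rep_mono_t {n : ℕ} (hn : n < D.k) {t t' : ℝ} (h : t ≤ t') :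
    ∀ m, (D.V n + (t * D.cc n) • sing (D.jj n)) m ≤ (D.V n + (t' * D.cc n) • sing (D.jj n)) m := by
  intro m
  have h1 := coordEq (rfl : (D.V n + (t * D.cc n) • sing (D.jj n)) = D.V n + (t * D.cc n) • sing (D.jj n)) m
  have h2 := coordEq (rfl : (D.V n + (t' * D.cc n) • sing (D.jj n)) = D.V n + (t' * D.cc n) • sing (D.jj n)) m
  have hcc := D.hpos n hn
  have hi := ite_nonneg m (D.jj n)
  nlinarith [mul_nonneg (mul_nonneg (sub_nonneg.2 h) hcc.le) hi]

lemma cl_comp {x y : Pt} (hx : x ∈ Cl D) (hy : y ∈ Cl D) :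
    (∀ m, x m ≤ y m) ∨ (∀ m, y m ≤ x m) := by
  rcases hx with rfl | ⟨n, hn, θ, h0, h1, hxe⟩
  · exact Or.inl (mem_le_V0 D hy)
  rcases hy with rfl | ⟨n', hn', θ', h0', h1', hye⟩
  · exact Or.inr (mem_le_V0 D (Or.inr ⟨n, hn, θ, h0, h1, hxe⟩))
  rcases lt_trichotomy n n' with h | h | h
  · left; intro m
    exact le_trans (rep_le_next D h1 hxe hn m)
      (le_trans (V_le D (by omega) (le_of_lt hn') m) (rep_ge D h0' hye hn' m))
  · subst h
    rcases le_total θ θ' with ht | ht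
    · left; intro m; rw [hxe, hye]; exact rep_mono_t D hn ht m
    · right; intro m; rw [hxe, hye]; exact rep_mono_t D hn ht m
  · right; intro m
    exact le_trans (rep_le_next D h1' hye hn' m)
      (le_trans (V_le D (by omega) (le_of_lt hn) m) (rep_ge D h0 hxe hn m))

end DLemmas


section IVT
variable (D : CD)

lemma rep_coord_j {x : Pt} {n : ℕ} {θ : ℝ}
    (hx : x = D.V n + (θ * D.cc n) • sing (D.jj n)) :
    x (D.jj n) = D.V n (D.jj n) + θ * D.cc n := by
  have := coordEq hx (D.jj n)
  simpa using this

lemma seg_ivt (α : Fin 3 → ℝ) (hα : ∀ m, 0 ≤ α m) {n : ℕ} (hn : n < D.k) {θ₀ θ₁ θ : ℝ}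
    (h01 : θ₀ ≤ θ₁)
    (hlo : lam α (D.V n + (θ₀ * D.cc n) • sing (D.jj n)) ≤ θ)
    (hhi : θ ≤ lam α (D.V n + (θ₁ * D.cc n) • sing (D.jj n))) :
    ∃ t, θ₀ ≤ t ∧ t ≤ θ₁ ∧ lam α (D.V n + (t * D.cc n) • sing (D.jj n)) = θ := by
  set A := lam α (D.V n) with hA
  set B : ℝ := D.cc n * α (D.jj n) with hB
  have hBnn : 0 ≤ B := mul_nonneg (D.hpos n hn).le (hα _)
  have lform : ∀ t : ℝ, lam α (D.V n + (t * D.cc n) • sing (D.jj n)) = A + t * B := by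
    intro t
    rw [lam_addSingle α (rfl : D.V n + (t * D.cc n) • sing (D.jj n) = _)]
    rw [hA, hB]; ring
  rw [lform] at hlo hhi
  by_cases hb : B * (θ₁ - θ₀) ≤ 0
  · have hle : A + θ₁ * B ≤ A + θ₀ * B := by nlinarith
    refine ⟨θ₀, le_refl _, h01, ?_⟩
    rw [lform]; linarith
  · push_neg at hb
    have hBpos : 0 < B := by nlinarith
    refine ⟨θ₀ + (θ - (A + θ₀ * B)) / B, ?_, ?_, ?_⟩
    · have h1 : 0 ≤ θ - (A + θ₀ * B) := by linarith
      have := div_nonneg h1 hBnn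
      linarith
    · rw [← sub_nonneg]
      have : θ₁ - (θ₀ + (θ - (A + θ₀ * B)) / B) = ((A + θ₁ * B) - θ) / B := by
        field_simp; ring
      rw [this]
      exact div_nonneg (by linarith) hBnn
    · rw [lform]; field_simp; ring

lemma ivt_basecase (α : Fin 3 → ℝ) (hα : ∀ m, 0 ≤ α m) {n₀ n₁ : ℕ} {θ₀ θ₁ θ : ℝ} {x y : Pt}
    (hn₀ : n₀ < D.k) (hn₁ : n₁ < D.k)
    (h00 : 0 ≤ θ₀) (h01 : θ₀ ≤ 1) (h10 : 0 ≤ θ₁) (h11 : θ₁ ≤ 1)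
    (hx : x = D.V n₀ + (θ₀ * D.cc n₀) • sing (D.jj n₀))
    (hy : y = D.V n₁ + (θ₁ * D.cc n₁) • sing (D.jj n₁))
    (hge : n₁ ≤ n₀)
    (hxy : ∀ m, x m ≤ y m) (hlo : lam α x ≤ θ) (hhi : θ ≤ lam α y) :
    ∃ mp, mp ∈ Cl D ∧ (∀ m, x m ≤ mp m) ∧ (∀ m, mp m ≤ y m) ∧ lam α mp = θ := by
  rcases Nat.lt_or_ge n₁ n₀ with h | h
  · -- then y ≤ x, so x = y
    have hyx : ∀ m, y m ≤ x m := by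
      intro m
      exact le_trans (rep_le_next D h11 hy hn₁ m)
        (le_trans (V_le D (by omega) (le_of_lt hn₀) m) (rep_ge D h00 hx hn₀ m))
    have hxyeq : x = y := funext fun m => le_antisymm (hxy m) (hyx m)
    refine ⟨x, Or.inr ⟨n₀, hn₀, θ₀, h00, h01, hx⟩, fun m => le_refl _,
      fun m => (hxyeq ▸ le_refl (x m)), le_antisymm hlo (by rw [hxyeq]; exact hhi)⟩
  · have heq : n₀ = n₁ := by omega
    subst heq
    have hθ : θ₀ ≤ θ₁ := by
      have c0 := rep_coord_j D hx
      have c1 := rep_coord_j D hy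
      have := hxy (D.jj n₀)
      have hcc := D.hpos n₀ hn₀
      nlinarith
    obtain ⟨t, ht0, ht1, hlam⟩ := seg_ivt D α hα hn₀ hθ (hx ▸ hlo) (hy ▸ hhi)
    refine ⟨D.V n₀ + (t * D.cc n₀) • sing (D.jj n₀),
      mem_Cl_of_rep D hn₀ (le_trans h00 ht0) (le_trans ht1 h11), ?_, ?_, hlam⟩
    · intro m; rw [hx]; exact rep_mono_t D hn₀ ht0 m
    · intro m; rw [hy]; exact rep_mono_t D hn₀ ht1 m

lemma ivt_aux (α : Fin 3 → ℝ) (hα : ∀ m, 0 ≤ α m) {n₁ : ℕ} {θ₁ θ : ℝ} {y : Pt}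
    (hn₁ : n₁ < D.k) (h10 : 0 ≤ θ₁) (h11 : θ₁ ≤ 1)
    (hy : y = D.V n₁ + (θ₁ * D.cc n₁) • sing (D.jj n₁)) :
    ∀ N : ℕ, ∀ n₀ : ℕ, ∀ θ₀ : ℝ, ∀ x : Pt, n₀ < D.k → 0 ≤ θ₀ → θ₀ ≤ 1 →
      x = D.V n₀ + (θ₀ * D.cc n₀) • sing (D.jj n₀) →
      (∀ m, x m ≤ y m) → lam α x ≤ θ → θ ≤ lam α y → n₁ - n₀ ≤ N →
      ∃ mp, mp ∈ Cl D ∧ (∀ m, x m ≤ mp m) ∧ (∀ m, mp m ≤ y m) ∧ lam α mp = θ := by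
  intro N
  induction N with
  | zero =>
    intro n₀ θ₀ x hn₀ h00 h01 hx hxy hlo hhi hgap
    exact ivt_basecase D α hα hn₀ hn₁ h00 h01 h10 h11 hx hy (by omega) hxy hlo hhi
  | succ N IH =>
    intro n₀ θ₀ x hn₀ h00 h01 hx hxy hlo hhi hgap
    rcases Nat.lt_or_ge n₀ n₁ with h | h
    · have hn₀1 : n₀ + 1 < D.k := by omega
      have hmid1 : D.V (n₀+1) = D.V n₀ + ((1:ℝ) * D.cc n₀) • sing (D.jj n₀) := by
        rw [one_mul]; exact D.hstep n₀ hn₀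
      have hxmid : ∀ m, x m ≤ D.V (n₀+1) m := rep_le_next D h01 hx hn₀
      have hmidy : ∀ m, D.V (n₀+1) m ≤ y m := by
        intro m
        exact le_trans (V_le D (by omega) (le_of_lt hn₁) m) (rep_ge D h10 hy hn₁ m)
      by_cases hθ : θ ≤ lam α (D.V (n₀+1))
      · obtain ⟨t, ht0, ht1, hlam⟩ := seg_ivt D α hα hn₀ h01 (hx ▸ hlo) (hmid1 ▸ hθ)
        refine ⟨D.V n₀ + (t * D.cc n₀) • sing (D.jj n₀),
          mem_Cl_of_rep D hn₀ (le_trans h00 ht0) ht1, ?_, ?_, hlam⟩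
        · intro m; rw [hx]; exact rep_mono_t D hn₀ ht0 m
        · intro m
          refine le_trans ?_ (hmidy m)
          have := rep_mono_t D hn₀ ht1 m
          calc (D.V n₀ + (t * D.cc n₀) • sing (D.jj n₀)) m
              ≤ (D.V n₀ + ((1:ℝ) * D.cc n₀) • sing (D.jj n₀)) m := this
            _ = D.V (n₀+1) m := by rw [← hmid1]
      · push_neg at hθ
        have hmid0 : D.V (n₀+1) = D.V (n₀+1) + ((0:ℝ) * D.cc (n₀+1)) • sing (D.jj (n₀+1)) := by
          simp
        obtain ⟨mp, hmp, hmp1, hmp2, hmp3⟩ :=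
          IH (n₀+1) 0 (D.V (n₀+1)) hn₀1 (le_refl _) zero_le_one hmid0 hmidy hθ.le hhi (by omega)
        exact ⟨mp, hmp, fun m => le_trans (hxmid m) (hmp1 m), hmp2, hmp3⟩
    · exact ivt_basecase D α hα hn₀ hn₁ h00 h01 h10 h11 hx hy h hxy hlo hhi

lemma ivt_cl (α : Fin 3 → ℝ) (hα : ∀ m, 0 ≤ α m) {x y : Pt} {θ : ℝ}
    (hx : x ∈ Cl D) (hy : y ∈ Cl D) (hxy : ∀ m, x m ≤ y m)
    (hlo : lam α x ≤ θ) (hhi : θ ≤ lam α y) :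
    ∃ mp, mp ∈ Cl D ∧ (∀ m, x m ≤ mp m) ∧ (∀ m, mp m ≤ y m) ∧ lam α mp = θ := by
  by_cases hk : D.k = 0
  · have hx0 : x = D.V 0 := by
      rcases hx with rfl | ⟨n, hn, _⟩
      · rfl
      · omega
    have hy0 : y = D.V 0 := by
      rcases hy with rfl | ⟨n, hn, _⟩
      · rfl
      · omega
    refine ⟨x, hx, fun m => le_refl _, fun m => by rw [hx0, ← hy0], ?_⟩
    have : lam α y = lam α x := by rw [hx0, hy0]
    linarith
  · have hk1 : 1 ≤ D.k := by omega
    obtain ⟨n₀, hn₀, θ₀, h00, h01, hxe⟩ := rep_of_mem D hk1 hx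
    obtain ⟨n₁, hn₁, θ₁, h10, h11, hye⟩ := rep_of_mem D hk1 hy
    exact ivt_aux D α hα hn₁ h10 h11 hye n₁ n₀ θ₀ x hn₀ h00 h01 hxe hxy hlo hhi (by omega)

end IVT


section Extract

lemma exists_CD {Ch : Set Pt} (h : IsSymmetricChain3 Ch) :
    ∃ D : CD, rho (D.V 0) + rho (D.V D.k) = 3 ∧
      (Ch = Cl D ∨ Ch = Cl D \ {D.V 0, D.V D.k}) := by
  obtain ⟨k, v, hstep, hsym, hform⟩ := h
  have hcj : ∀ i : Fin k, ∃ (c : ℝ) (j : Fin 3), 0 < c ∧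
      v i.succ = v i.castSucc + c • sing j := hstep
  classical
  let cc : ℕ → ℝ := fun n => if hn : n < k then (hcj ⟨n, hn⟩).choose else 1
  let jj : ℕ → Fin 3 := fun n => if hn : n < k then (hcj ⟨n, hn⟩).choose_spec.choose else 0
  let V : ℕ → Pt := fun n => v ⟨min n k, by omega⟩
  have hVcast : ∀ i : Fin k, V i.val = v i.castSucc := by
    intro i
    have hik : i.val < k := i.isLt
    exact congrArg v (Fin.ext (by simp only [Fin.coe_castSucc]; omega))
  have hVsucc : ∀ i : Fin k, V (i.val + 1) = v i.succ := by
    intro i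
    have hik : i.val < k := i.isLt
    exact congrArg v (Fin.ext (by simp only [Fin.val_succ]; omega))
  have hccj : ∀ i : Fin k, 0 < cc i.val ∧ v i.succ = v i.castSucc + (cc i.val) • sing (jj i.val) := by
    intro i
    have e1 : cc i.val = (hcj ⟨i.val, i.isLt⟩).choose := dif_pos i.isLt
    have e2 : jj i.val = (hcj ⟨i.val, i.isLt⟩).choose_spec.choose := dif_pos i.isLt
    have hs := (hcj ⟨i.val, i.isLt⟩).choose_spec.choose_spec
    rw [e1, e2]
    simpa [Fin.eta] using hs
  have hspec : ∀ n, n < k → 0 < cc n ∧ V (n + 1) = V n + (cc n) • sing (jj n) := by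
    intro n hn
    have h1 := hccj ⟨n, hn⟩
    refine ⟨h1.1, ?_⟩
    rw [hVsucc ⟨n, hn⟩, hVcast ⟨n, hn⟩]
    exact h1.2
  refine ⟨⟨k, V, cc, jj, fun n hn => (hspec n hn).1, fun n hn => (hspec n hn).2⟩, ?_, ?_⟩
  all_goals
    have hV0 : V 0 = v 0 := congrArg v (Fin.ext (by simp only [Fin.val_zero]; omega))
    have hVk : V k = v (Fin.last k) := congrArg v (Fin.ext (by simp only [Fin.val_last]; omega))
  · show rho (V 0) + rho (V k) = 3
    rw [hV0, hVk]
    have e0 : rho (v 0) = ∑ j, v 0 j := by rw [Fin.sum_univ_three]; rfl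
    have e1 : rho (v (Fin.last k)) = ∑ j, v (Fin.last k) j := by rw [Fin.sum_univ_three]; rfl
    rw [e0, e1]; exact hsym
  · have hCl : Cl ⟨k, V, cc, jj, fun n hn => (hspec n hn).1, fun n hn => (hspec n hn).2⟩
        = {v 0} ∪ ⋃ i : Fin k, segment ℝ (v i.castSucc) (v i.succ) := by
      ext x
      show (x = V 0 ∨ ∃ n, n < k ∧ ∃ θ : ℝ, 0 ≤ θ ∧ θ ≤ 1 ∧
        x = V n + (θ * cc n) • sing (jj n)) ↔ _
      constructor
      · rintro (rfl | ⟨n, hn, θ, h0, h1, hx⟩)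
        · left; exact hV0
        · right
          refine Set.mem_iUnion.2 ⟨⟨n, hn⟩, ?_⟩
          rw [segment_eq_image']
          refine ⟨θ, ⟨h0, h1⟩, ?_⟩
          show v _ + θ • (v _ - v _) = x
          have hd : v (⟨n, hn⟩ : Fin k).succ - v (⟨n, hn⟩ : Fin k).castSucc
              = (cc n) • sing (jj n) := by
            rw [(hccj ⟨n, hn⟩).2]; abel
          rw [hd, ← hVcast ⟨n, hn⟩]
          rw [smul_smul]
          exact hx.symm
      · rintro (hx | hx)
        · left; rw [Set.mem_singleton_iff] at hx; rw [hx, hV0]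
        · obtain ⟨i, hi⟩ := Set.mem_iUnion.1 hx
          rw [segment_eq_image'] at hi
          obtain ⟨θ, ⟨h0, h1⟩, hx⟩ := hi
          have hx' : v i.castSucc + θ • (v i.succ - v i.castSucc) = x := hx
          right
          refine ⟨i.val, i.isLt, θ, h0, h1, ?_⟩
          have hd : v i.succ - v i.castSucc = (cc i.val) • sing (jj i.val) := by
            rw [(hccj i).2]; abel
          rw [hd, smul_smul] at hx'
          rw [hVcast i]
          exact hx'.symm
    rw [hCl]
    show Ch = _ ∨ Ch = _ \ {V 0, V k}
    rw [hV0, hVk]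
    exact hform

end Extract

section Upgrade
variable (D : CD) (Ch : Set Pt)

lemma ch_sub_cl (hform : Ch = Cl D ∨ Ch = Cl D \ {D.V 0, D.V D.k}) : Ch ⊆ Cl D := by
  rcases hform with rfl | rfl
  · exact le_refl _
  · exact Set.diff_subset

lemma eq_of_le_le {x y : Pt} (h1 : ∀ m, x m ≤ y m) (h2 : ∀ m, y m ≤ x m) : x = y :=
  funext fun m => le_antisymm (h1 m) (h2 m)

lemma mem_ch_between (hform : Ch = Cl D ∨ Ch = Cl D \ {D.V 0, D.V D.k})
    {x y mp : Pt} (hx : x ∈ Ch) (hy : y ∈ Ch) (hm : mp ∈ Cl D)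
    (h1 : ∀ i, x i ≤ mp i) (h2 : ∀ i, mp i ≤ y i) : mp ∈ Ch := by
  rcases hform with rfl | rfl
  · exact hm
  · refine ⟨hm, ?_⟩
    simp only [Set.mem_insert_iff, Set.mem_singleton_iff]
    push_neg
    constructor
    · intro hc
      have hxcl : x ∈ Cl D := hx.1
      have : x = D.V 0 := eq_of_le_le
        (fun m => (hc ▸ h1 m : x m ≤ D.V 0 m)) (mem_le_V0 D hxcl)
      exact hx.2 (by simp [this])
    · intro hc
      have hycl : y ∈ Cl D := hy.1
      have : y = D.V D.k := eq_of_le_le (mem_le_Vk D hycl)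
        (fun m => (hc ▸ h2 m : D.V D.k m ≤ y m))
      exact hy.2 (by simp [this])

end Upgrade


section SLemmas

lemma Sset_not_mid {u : Pt} (h : u ∈ Sset) :
    ¬(0 < u 0 ∧ u 0 < 1 ∧ 0 < u 1 ∧ u 1 < 1) := by
  obtain ⟨hb, ⟨i, hi⟩, hrem⟩ := h
  intro hmid
  apply hrem
  refine ⟨?_, hmid.1, hmid.2.1, hmid.2.2.1, hmid.2.2.2⟩
  fin_cases i
  · have hi' : u 0 = 0 ∨ u 0 = 1 := hi
    rcases hi' with h | h
    · exact absurd h (by have := hmid.1; linarith)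
    · exact absurd h (by have := hmid.2.1; linarith)
  · have hi' : u 1 = 0 ∨ u 1 = 1 := hi
    rcases hi' with h | h
    · exact absurd h (by have := hmid.2.2.1; linarith)
    · exact absurd h (by have := hmid.2.2.2; linarith)
  · exact hi

lemma Sset_not_mid' (a b : Fin 3) (hcase : a = 0 ∧ b = 1 ∨ a = 1 ∧ b = 0) {u : Pt}
    (h : u ∈ Sset) : ¬(0 < u a ∧ u a < 1 ∧ 0 < u b ∧ u b < 1) := by
  have h2 := Sset_not_mid h
  rcases hcase with ⟨rfl, rfl⟩ | ⟨rfl, rfl⟩ <;> tauto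

lemma mem_exhaust (a b : Fin 3) (hcase : a = 0 ∧ b = 1 ∨ a = 1 ∧ b = 0) :
    ∀ m : Fin 3, m = a ∨ m = b ∨ m = 2 := by
  rcases hcase with ⟨rfl, rfl⟩ | ⟨rfl, rfl⟩ <;> intro m <;> fin_cases m <;> simp

lemma rho_ab (a b : Fin 3) (hcase : a = 0 ∧ b = 1 ∨ a = 1 ∧ b = 0) (u : Pt) :
    rho u = u a + u b + u 2 := by
  rcases hcase with ⟨rfl, rfl⟩ | ⟨rfl, rfl⟩ <;> unfold rho <;> ring

lemma identify (a b : Fin 3) (hcase : a = 0 ∧ b = 1 ∨ a = 1 ∧ b = 0) {u u' : Pt}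
    (hu : u ∈ Sset) (hu' : u' ∈ Sset)
    (h1 : u b = 0 ∨ u a = 1) (h2 : u' b = 0 ∨ u' a = 1)
    (hw : u a + u b = u' a + u' b) (hz : u 2 = u' 2) : u = u' := by
  have hua1 : u a ≤ 1 := (hu.1 a).2
  have hua0 : 0 ≤ u a := (hu.1 a).1
  have hub0 : 0 ≤ u b := (hu.1 b).1
  have hu'a1 : u' a ≤ 1 := (hu'.1 a).2
  have hu'a0 : 0 ≤ u' a := (hu'.1 a).1
  have hu'b0 : 0 ≤ u' b := (hu'.1 b).1
  have hab : u a = u' a ∧ u b = u' b := by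
    rcases h1 with h1 | h1 <;> rcases h2 with h2 | h2 <;> constructor <;> linarith
  funext m
  rcases mem_exhaust a b hcase m with rfl | rfl | rfl
  · exact hab.1
  · exact hab.2
  · exact hz

lemma g1 (D : CD) (Ch : Set Pt)
    (hform : Ch = Cl D ∨ Ch = Cl D \ {D.V 0, D.V D.k}) (hsub : Ch ⊆ Sset)
    (a b : Fin 3) (hcase : a = 0 ∧ b = 1 ∨ a = 1 ∧ b = 0) {p₁ u : Pt}
    (hp₁ : p₁ ∈ Ch) (hu : u ∈ Ch)
    (hle : ∀ m, p₁ m ≤ u m) (hpa : 0 < p₁ a) (hpb : p₁ b = 0) :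
    u b = 0 ∨ u a = 1 := by
  by_contra hcon
  push_neg at hcon
  obtain ⟨hub, hua⟩ := hcon
  have hbS := hsub hu
  have hub0 : 0 < u b := lt_of_le_of_ne (hbS.1 b).1 (Ne.symm hub)
  have hua1 : u a < 1 := lt_of_le_of_ne (hbS.1 a).2 hua
  rcases lt_or_ge (u b) 1 with h | h
  · exact Sset_not_mid' a b hcase hbS ⟨lt_of_lt_of_le hpa (hle a), hua1, hub0, h⟩
  · have hub1 : u b = 1 := le_antisymm (hbS.1 b).2 h
    obtain ⟨mp, hmp, hm1, hm2, hm3⟩ := ivt_cl D (fun m => if m = b then 1 else 0)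
      (fun m => ite_nonneg m b)
      (ch_sub_cl D Ch hform hp₁) (ch_sub_cl D Ch hform hu) hle
      (θ := 1/2) (by rw [lam_ind, hpb]; norm_num) (by rw [lam_ind, hub1]; norm_num)
    have hmpCh : mp ∈ Ch := mem_ch_between D Ch hform hp₁ hu hmp hm1 hm2
    have hmpS := hsub hmpCh
    rw [lam_ind] at hm3
    refine Sset_not_mid' a b hcase hmpS
      ⟨lt_of_lt_of_le hpa (hm1 a), lt_of_le_of_lt (hm2 a) hua1, ?_, ?_⟩ <;> rw [hm3] <;> norm_num

end SLemmas


section Crossing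

def Phi (E : Set Pt) (p x' : Pt) : Prop :=
  ∀ mm, mm ∈ E → (∀ m, p m ≤ mm m) → rho mm = rho x' → mm 2 < x' 2

lemma step (a b : Fin 3) (hcase : a = 0 ∧ b = 1 ∨ a = 1 ∧ b = 0)
    {E C' : Set Pt} (DE DC : CD)
    (formE : E = Cl DE ∨ E = Cl DE \ {DE.V 0, DE.V DE.k})
    (formC : C' = Cl DC ∨ C' = Cl DC \ {DC.V 0, DC.V DC.k})
    (hsubE : E ⊆ Sset) (hsubC : C' ⊆ Sset)
    (hdisj : ∀ z, z ∈ E → z ∈ C' → False)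
    {p p' : Pt} (hpE : p ∈ E) (hpa : 0 < p a) (hpb : p b = 0) (hrp : rho p = 1/2)
    (hp'C : p' ∈ C') (hp'a : 0 < p' a) (hp'b : p' b = 0) (hrp' : rho p' = 1/2)
    {n : ℕ} (hn : n < DC.k) {θ₀ θ₁ : ℝ}
    (h00 : 0 ≤ θ₀) (h01 : θ₀ ≤ θ₁) (h11 : θ₁ ≤ 1)
    {x' y' : Pt}
    (hx'def : x' = DC.V n + (θ₀ * DC.cc n) • sing (DC.jj n))
    (hy'def : y' = DC.V n + (θ₁ * DC.cc n) • sing (DC.jj n))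
    (hx'C : x' ∈ C') (hy'C : y' ∈ C')
    (hp'x : ∀ m, p' m ≤ x' m)
    (IH : Phi E p x') : Phi E p y' := by
  intro mm hmmE hpmm hrmm
  have hccpos := DC.hpos n hn
  have hrx : rho p ≤ rho x' := by
    rw [hrp, ← hrp']; exact rho_mono hp'x
  have e1 := rho_addSingle hx'def
  have e0 := rho_addSingle hy'def
  have hδ : rho y' = rho x' + (θ₁ - θ₀) * DC.cc n := by linear_combination e0 - e1
  have hδnn : 0 ≤ (θ₁ - θ₀) * DC.cc n := mul_nonneg (by linarith) hccpos.le
  have hpCl := ch_sub_cl DE E formE hpE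
  have hmmCl := ch_sub_cl DE E formE hmmE
  obtain ⟨m0, hm0Cl, hm0a, hm0b, hm0lam⟩ := ivt_cl DE (fun _ => 1) (fun _ => zero_le_one)
    hpCl hmmCl hpmm (θ := rho x')
    (by rw [lam_ones]; exact hrx) (by rw [lam_ones, hrmm, hδ]; linarith)
  rw [lam_ones] at hm0lam
  have hm0E : m0 ∈ E := mem_ch_between DE E formE hpE hmmE hm0Cl hm0a hm0b
  have hm0z : m0 2 < x' 2 := IH m0 hm0E hm0a hm0lam
  by_cases hj2 : DC.jj n = 2
  · -- z-direction step
    have c1 := coordEq hx'def 2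
    have c2 := coordEq hy'def 2
    rw [hj2] at c1 c2
    norm_num at c1 c2
    by_contra hcon
    push_neg at hcon
    have hwm : mm a + mm b ≤ rho x' - x' 2 := by
      have h3 := rho_ab a b hcase mm
      have h4 : rho mm = rho x' + (θ₁ - θ₀) * DC.cc n := by rw [hrmm, hδ]
      have h5 : x' 2 + (θ₁ - θ₀) * DC.cc n ≤ mm 2 := by
        have : y' 2 = x' 2 + (θ₁ - θ₀) * DC.cc n := by linarith
        linarith
      linarith
    have hwm0 : rho x' - x' 2 < m0 a + m0 b := by
      have h3 := rho_ab a b hcase m0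
      linarith
    have hle' : m0 a + m0 b ≤ mm a + mm b := by
      have := hm0b a; have := hm0b b; linarith
    linarith
  · -- horizontal step
    by_contra hcon
    push_neg at hcon
    have hitez : (if (2:Fin 3) = DC.jj n then (1:ℝ) else 0) = 0 := by
      rw [if_neg]; intro h; exact hj2 h.symm
    have c1 := coordEq hx'def 2
    have c2 := coordEq hy'def 2
    rw [hitez] at c1 c2
    have hz' : y' 2 = x' 2 := by
      simp only [mul_zero, add_zero] at c1 c2; rw [c1, c2]
    obtain ⟨M, hMCl, hMa, hMb, hMlam⟩ := ivt_cl DE (fun m => if m = 2 then 1 else 0)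
      (fun m => ite_nonneg m 2) hm0Cl hmmCl hm0b (θ := x' 2)
      (by rw [lam_ind]; linarith) (by rw [lam_ind]; linarith)
    rw [lam_ind] at hMlam
    have hME : M ∈ E := mem_ch_between DE E formE hm0E hmmE hMCl hMa hMb
    set d : ℝ := rho M - rho x' with hd
    have hd0 : 0 ≤ d := by
      have := rho_mono hMa; rw [hm0lam] at this; rw [hd]; linarith
    have hdδ : d ≤ (θ₁ - θ₀) * DC.cc n := by
      have := rho_mono hMb; rw [hrmm, hδ] at this; rw [hd]; linarith
    set t : ℝ := θ₀ + d / DC.cc n with ht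
    have hdiv0 : 0 ≤ d / DC.cc n := div_nonneg hd0 hccpos.le
    have ht0 : θ₀ ≤ t := by rw [ht]; linarith
    have ht1 : t ≤ θ₁ := by
      have hq : d / DC.cc n ≤ θ₁ - θ₀ := (div_le_iff₀ hccpos).2 (by linarith)
      rw [ht]; linarith
    have htcc : t * DC.cc n = θ₀ * DC.cc n + d := by
      rw [ht]; field_simp
    set xx' : Pt := DC.V n + (t * DC.cc n) • sing (DC.jj n) with hxx
    have hxxCl : xx' ∈ Cl DC := mem_Cl_of_rep DC hn (le_trans h00 ht0) (le_trans ht1 h11)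
    have hxxx : ∀ m, x' m ≤ xx' m := by
      intro m; rw [hx'def, hxx]; exact rep_mono_t DC hn ht0 m
    have hxxy : ∀ m, xx' m ≤ y' m := by
      intro m; rw [hy'def, hxx]; exact rep_mono_t DC hn ht1 m
    have hxxC : xx' ∈ C' := mem_ch_between DC C' formC hx'C hy'C hxxCl hxxx hxxy
    have cxx := coordEq hxx 2
    rw [hitez] at cxx
    have hxx2 : xx' 2 = x' 2 := by
      simp only [mul_zero, add_zero] at cxx c1; rw [cxx, c1]
    have exx := rho_addSingle hxx
    have hrxx : rho xx' = rho M := by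
      rw [exx, htcc, hd]; linarith
    have hwM : M a + M b = xx' a + xx' b := by
      have g1' := rho_ab a b hcase M
      have g2' := rho_ab a b hcase xx'
      rw [hMlam] at g1'
      rw [hxx2] at g2'
      linarith [hrxx]
    have hG1 : M b = 0 ∨ M a = 1 :=
      g1 DE E formE hsubE a b hcase hpE hME (fun m => le_trans (hm0a m) (hMa m)) hpa hpb
    have hG2 : xx' b = 0 ∨ xx' a = 1 :=
      g1 DC C' formC hsubC a b hcase hp'C hxxC (fun m => le_trans (hp'x m) (hxxx m)) hp'a hp'b
    have hMeq : M = xx' := identify a b hcase (hsubE hME) (hsubC hxxC) hG1 hG2 hwM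
      (by rw [hMlam, hxx2])
    exact hdisj M hME (hMeq ▸ hxxC)

end Crossing


section Transport

lemma transport (a b : Fin 3) (hcase : a = 0 ∧ b = 1 ∨ a = 1 ∧ b = 0)
    {E C' : Set Pt} (DE DC : CD)
    (formE : E = Cl DE ∨ E = Cl DE \ {DE.V 0, DE.V DE.k})
    (formC : C' = Cl DC ∨ C' = Cl DC \ {DC.V 0, DC.V DC.k})
    (hsubE : E ⊆ Sset) (hsubC : C' ⊆ Sset)
    (hdisj : ∀ z, z ∈ E → z ∈ C' → False)
    {p p' : Pt} (hpE : p ∈ E) (hpa : 0 < p a) (hpb : p b = 0) (hrp : rho p = 1/2)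
    (hp'C : p' ∈ C') (hp'a : 0 < p' a) (hp'b : p' b = 0) (hrp' : rho p' = 1/2)
    {n₁ : ℕ} (hn₁ : n₁ < DC.k) {θ₁ : ℝ} (h10 : 0 ≤ θ₁) (h11 : θ₁ ≤ 1)
    {y' : Pt} (hy'def : y' = DC.V n₁ + (θ₁ * DC.cc n₁) • sing (DC.jj n₁))
    (hy'C : y' ∈ C') :
    ∀ N : ℕ, ∀ n₀ : ℕ, ∀ θ₀ : ℝ, ∀ x' : Pt,
      n₀ < DC.k → 0 ≤ θ₀ → θ₀ ≤ 1 →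
      x' = DC.V n₀ + (θ₀ * DC.cc n₀) • sing (DC.jj n₀) →
      x' ∈ C' → (∀ m, p' m ≤ x' m) → (∀ m, x' m ≤ y' m) →
      n₁ - n₀ ≤ N → Phi E p x' → Phi E p y' := by
  have base : ∀ n₀ : ℕ, ∀ θ₀ : ℝ, ∀ x' : Pt,
      n₀ < DC.k → 0 ≤ θ₀ → θ₀ ≤ 1 →
      x' = DC.V n₀ + (θ₀ * DC.cc n₀) • sing (DC.jj n₀) →
      x' ∈ C' → (∀ m, p' m ≤ x' m) → (∀ m, x' m ≤ y' m) →
      n₁ ≤ n₀ → Phi E p x' → Phi E p y' := by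
    intro n₀ θ₀ x' hn₀ h00 h01 hx'def hx'C hp'x hxy hge IH
    rcases Nat.lt_or_ge n₁ n₀ with h | h
    · -- y' ≤ x', so x' = y'
      have hyx : ∀ m, y' m ≤ x' m := by
        intro m
        exact le_trans (rep_le_next DC h11 hy'def hn₁ m)
          (le_trans (V_le DC (by omega) (le_of_lt hn₀) m) (rep_ge DC h00 hx'def hn₀ m))
      have : x' = y' := eq_of_le_le hxy hyx
      rw [← this]; exact IH
    · have heq : n₀ = n₁ := by omega
      subst heq
      have hθ : θ₀ ≤ θ₁ := by
        have c0 := rep_coord_j DC hx'def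
        have c1 := rep_coord_j DC hy'def
        have := hxy (DC.jj n₀)
        have hcc := DC.hpos n₀ hn₀
        nlinarith
      exact step a b hcase DE DC formE formC hsubE hsubC hdisj hpE hpa hpb hrp
        hp'C hp'a hp'b hrp' hn₀ h00 hθ h11 hx'def hy'def hx'C hy'C hp'x IH
  intro N
  induction N with
  | zero =>
    intro n₀ θ₀ x' hn₀ h00 h01 hx'def hx'C hp'x hxy hgap IH
    exact base n₀ θ₀ x' hn₀ h00 h01 hx'def hx'C hp'x hxy (by omega) IH
  | succ N IHN =>
    intro n₀ θ₀ x' hn₀ h00 h01 hx'def hx'C hp'x hxy hgap IH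
    rcases Nat.lt_or_ge n₀ n₁ with h | h
    · have hn₀1 : n₀ + 1 < DC.k := by omega
      have hmid1 : DC.V (n₀+1) = DC.V n₀ + ((1:ℝ) * DC.cc n₀) • sing (DC.jj n₀) := by
        rw [one_mul]; exact DC.hstep n₀ hn₀
      have hmid0 : DC.V (n₀+1) = DC.V (n₀+1) + ((0:ℝ) * DC.cc (n₀+1)) • sing (DC.jj (n₀+1)) := by
        simp
      have hxmid : ∀ m, x' m ≤ DC.V (n₀+1) m := rep_le_next DC h01 hx'def hn₀
      have hmidy : ∀ m, DC.V (n₀+1) m ≤ y' m := by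
        intro m
        exact le_trans (V_le DC (by omega) (le_of_lt hn₁) m) (rep_ge DC h10 hy'def hn₁ m)
      have hmidCl : DC.V (n₀+1) ∈ Cl DC := by
        rw [hmid1]; exact mem_Cl_of_rep DC hn₀ zero_le_one (le_refl _)
      have hmidC : DC.V (n₀+1) ∈ C' := mem_ch_between DC C' formC hx'C hy'C hmidCl hxmid hmidy
      have hPhiMid : Phi E p (DC.V (n₀+1)) :=
        step a b hcase DE DC formE formC hsubE hsubC hdisj hpE hpa hpb hrp
          hp'C hp'a hp'b hrp' hn₀ h00 h01 (le_refl 1) hx'def hmid1 hx'C hmidC hp'x IH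
      exact IHN (n₀+1) 0 (DC.V (n₀+1)) hn₀1 (le_refl _) zero_le_one hmid0 hmidC
        (fun m => le_trans (hp'x m) (hxmid m)) hmidy (by omega) hPhiMid
    · exact base n₀ θ₀ x' hn₀ h00 h01 hx'def hx'C hp'x hxy h IH

end Transport


section Main

lemma main_aux (𝒞 : Set (Set Pt)) (hC : ∀ Ch ∈ 𝒞, IsSymmetricChain3 Ch)
    (hU : ⋃₀ 𝒞 = Sset)
    (hDj : ∀ Ch ∈ 𝒞, ∀ Ch' ∈ 𝒞, Ch ≠ Ch' → Disjoint Ch Ch')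
    (a b : Fin 3) (hcase : a = 0 ∧ b = 1 ∨ a = 1 ∧ b = 0)
    {E : Set Pt} (hE : E ∈ 𝒞)
    (heA : (fun m => if m = b then (1/2:ℝ) else 1) ∈ E) :
    (fun m => if m = 2 then (1/2:ℝ) else 0) ∈ E := by
  have habs : a ≠ b ∧ a ≠ 2 ∧ b ≠ 2 := by
    rcases hcase with ⟨rfl, rfl⟩ | ⟨rfl, rfl⟩ <;> exact ⟨by decide, by decide, by decide⟩
  set eA : Pt := fun m => if m = b then (1/2:ℝ) else 1 with heAdef
  have heAa : eA a = 1 := by rw [heAdef]; exact if_neg habs.1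
  have heAb : eA b = 1/2 := by rw [heAdef]; exact if_pos rfl
  have heA2 : eA 2 = 1 := by rw [heAdef]; exact if_neg (Ne.symm habs.2.2)
  have hreA : rho eA = 5/2 := by rw [rho_ab a b hcase, heAa, heAb, heA2]; norm_num
  have hsubE : E ⊆ Sset := by rw [← hU]; exact Set.subset_sUnion_of_mem hE
  obtain ⟨DE, hsymE, formE⟩ := exists_CD (hC E hE)
  have heACl : eA ∈ Cl DE := ch_sub_cl DE E formE heA
  have hVkE_ge : 5/2 ≤ rho (DE.V DE.k) := by
    have := rho_mono (mem_le_Vk DE heACl); rw [hreA] at this; linarith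
  have hV0E_le : rho (DE.V 0) ≤ 1/2 := by linarith [hsymE]
  have hV0Cl : DE.V 0 ∈ Cl DE := Or.inl rfl
  obtain ⟨p, hpCl, hp1, hp2, hplam⟩ := ivt_cl DE (fun _ => 1) (fun _ => zero_le_one)
    hV0Cl heACl (mem_le_V0 DE heACl) (θ := 1/2)
    (by rw [lam_ones]; exact hV0E_le) (by rw [lam_ones, hreA]; norm_num)
  rw [lam_ones] at hplam
  have hpE : p ∈ E := by
    rcases formE with hf | hf
    · rw [hf]; exact hpCl
    · have heA_ne : eA ≠ DE.V DE.k := by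
        rw [hf] at heA; exact fun hh => heA.2 (by simp [hh])
      have hVk_gt : 5/2 < rho (DE.V DE.k) := by
        rcases lt_or_eq_of_le hVkE_ge with h | h
        · exact h
        · exact absurd (eq_of_le_rho (mem_le_Vk DE heACl) (by rw [hreA, ← h])) heA_ne
      have hV0_lt : rho (DE.V 0) < 1/2 := by linarith [hsymE]
      rw [hf]
      refine ⟨hpCl, ?_⟩
      simp only [Set.mem_insert_iff, Set.mem_singleton_iff]
      push_neg
      constructor
      · intro hh; rw [hh] at hplam; linarith
      · intro hh; rw [hh] at hplam; linarith
  have hpS : p ∈ Sset := hsubE hpE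
  have hp0 : ∀ m, 0 ≤ p m := fun m => (hpS.1 m).1
  have hrhop := rho_ab a b hcase p
  have hple : ∀ m, p m ≤ 1/2 := by
    intro m
    have h0 := hp0 0; have h1 := hp0 1; have h2 := hp0 2
    have hr : p 0 + p 1 + p 2 = 1/2 := hplam
    fin_cases m
    · show p 0 ≤ 1/2; linarith
    · show p 1 ≤ 1/2; linarith
    · show p 2 ≤ 1/2; linarith
  have hzero : p a = 0 ∨ p b = 0 := by
    have h01 : p 0 = 0 ∨ p 1 = 0 := by
      obtain ⟨i, hi⟩ := hpS.2.1
      fin_cases i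
      · have hi' : p 0 = 0 ∨ p 0 = 1 := hi
        rcases hi' with h | h
        · exact Or.inl h
        · exact absurd h (by have := hple 0; intro hh; rw [hh] at this; norm_num at this)
      · have hi' : p 1 = 0 ∨ p 1 = 1 := hi
        rcases hi' with h | h
        · exact Or.inr h
        · exact absurd h (by have := hple 1; intro hh; rw [hh] at this; norm_num at this)
      · have hi' : p 2 = 0 ∨ p 2 = 1 := hi
        rcases hi' with h | h
        · have hrem := hpS.2.2
          by_contra hcon
          push_neg at hcon
          obtain ⟨h0ne, h1ne⟩ := hcon
          exact hrem ⟨Or.inl h, lt_of_le_of_ne (hp0 0) (Ne.symm h0ne),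
            by linarith [hple 0], lt_of_le_of_ne (hp0 1) (Ne.symm h1ne), by linarith [hple 1]⟩
        · exact absurd h (by have := hple 2; intro hh; rw [hh] at this; norm_num at this)
    rcases hcase with ⟨rfl, rfl⟩ | ⟨rfl, rfl⟩
    · exact h01
    · exact h01.symm
  rcases hzero with hpa0 | hpb0
  · -- p a = 0 : either done (p b = 0) or neg-side contradiction
    by_cases hpb0 : p b = 0
    · have hp2c : p 2 = 1/2 := by linarith [hplam, hrhop, hpa0, hpb0]
      have hpj : p = (fun m => if m = 2 then (1/2:ℝ) else 0) := by
        funext m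
        rcases mem_exhaust a b hcase m with rfl | rfl | rfl
        · rw [if_neg habs.2.1]; exact hpa0
        · rw [if_neg habs.2.2]; exact hpb0
        · rw [if_pos rfl]; exact hp2c
      rw [← hpj]; exact hpE
    · have hpb_pos : 0 < p b := lt_of_le_of_ne (hp0 b) (Ne.symm hpb0)
      have hcase' : b = 0 ∧ a = 1 ∨ b = 1 ∧ a = 0 := by tauto
      have hg := g1 DE E formE hsubE b a hcase' hpE heA hp2 hpb_pos hpa0
      rcases hg with h | h
      · rw [heAa] at h; norm_num at h
      · rw [heAb] at h; norm_num at h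
  · -- p b = 0 : either done or crossing contradiction
    by_cases hpa0 : p a = 0
    · have hp2c : p 2 = 1/2 := by linarith [hplam, hrhop, hpa0, hpb0]
      have hpj : p = (fun m => if m = 2 then (1/2:ℝ) else 0) := by
        funext m
        rcases mem_exhaust a b hcase m with rfl | rfl | rfl
        · rw [if_neg habs.2.1]; exact hpa0
        · rw [if_neg habs.2.2]; exact hpb0
        · rw [if_pos rfl]; exact hp2c
      rw [← hpj]; exact hpE
    · exfalso
      have hpa_pos : 0 < p a := lt_of_le_of_ne (hp0 a) (Ne.symm hpa0)
      set x0 : ℝ := p a with hx0def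
      have hx0le : x0 ≤ 1/2 := hple a
      set p' : Pt := fun m => if m = a then x0/2 else if m = 2 then 1/2 - x0/2 else 0
        with hp'def
      have hp'a : p' a = x0/2 := by rw [hp'def]; exact if_pos rfl
      have hp'b : p' b = 0 := by
        rw [hp'def]
        simp only
        rw [if_neg (Ne.symm habs.1), if_neg habs.2.2]
      have hp'2 : p' 2 = 1/2 - x0/2 := by
        rw [hp'def]
        simp only
        rw [if_neg (Ne.symm habs.2.1)]; norm_num
      have hrp' : rho p' = 1/2 := by rw [rho_ab a b hcase, hp'a, hp'b, hp'2]; ring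
      have hp'S : p' ∈ Sset := by
        refine ⟨?_, ⟨b, Or.inl hp'b⟩, ?_⟩
        · intro i
          rcases mem_exhaust a b hcase i with rfl | rfl | rfl
          · rw [hp'a]; constructor <;> linarith
          · rw [hp'b]; constructor <;> linarith
          · rw [hp'2]; constructor <;> linarith
        · intro hcontra
          rcases hcase with ⟨ha', hb'⟩ | ⟨ha', hb'⟩
          · rw [hb'] at hp'b
            have := hcontra.2.2.2.1
            rw [hp'b] at this; norm_num at this
          · rw [hb'] at hp'b
            have := hcontra.2.1
            rw [hp'b] at this; norm_num at this
      obtain ⟨C', hC'mem, hp'C⟩ : ∃ C' ∈ 𝒞, p' ∈ C' := by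
        have : p' ∈ ⋃₀ 𝒞 := by rw [hU]; exact hp'S
        exact Set.mem_sUnion.1 this
      have hsubC : C' ⊆ Sset := by rw [← hU]; exact Set.subset_sUnion_of_mem hC'mem
      obtain ⟨DC, hsymC, formC⟩ := exists_CD (hC C' hC'mem)
      have hne : E ≠ C' := by
        rintro rfl
        have hp'Cl : p' ∈ Cl DE := ch_sub_cl DE E formE hp'C
        have hcomp := cl_comp DE hpCl hp'Cl
        have hpp' : p = p' := by
          rcases hcomp with h | h
          · exact eq_of_le_rho h (by rw [hplam, hrp'])
          · exact (eq_of_le_rho h (by rw [hplam, hrp'])).symm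
        have h5 := congrFun hpp' a
        rw [hp'a] at h5
        have h6 : x0 = x0 / 2 := h5
        linarith
      have hdisj : ∀ z, z ∈ E → z ∈ C' → False := by
        intro z h1 h2
        exact Set.disjoint_left.1 (hDj E hE C' hC'mem hne) h1 h2
      have hp'Cl : p' ∈ Cl DC := ch_sub_cl DC C' formC hp'C
      have hkC : 1 ≤ DC.k := by
        by_contra hk
        push_neg at hk
        have hk0 : DC.k = 0 := by omega
        have hp'V0 : p' = DC.V 0 := by
          rcases hp'Cl with h | ⟨n, hn, _⟩
          · exact h
          · omega
        rw [hk0, ← hp'V0, hrp'] at hsymC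
        norm_num at hsymC
      have hV0C_le : rho (DC.V 0) ≤ 1/2 := by
        have := rho_mono (mem_le_V0 DC hp'Cl); rw [hrp'] at this; linarith
      have hVkC_ge : 5/2 ≤ rho (DC.V DC.k) := by linarith [hsymC]
      have hVkCl : DC.V DC.k ∈ Cl DC := by
        have h1 : DC.k - 1 < DC.k := by omega
        have hkk : DC.k - 1 + 1 = DC.k := by omega
        have heq : DC.V DC.k = DC.V (DC.k - 1) + ((1:ℝ) * DC.cc (DC.k-1)) • sing (DC.jj (DC.k-1)) := by
          rw [one_mul]
          have := DC.hstep (DC.k-1) h1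
          rw [hkk] at this
          exact this
        rw [heq]; exact mem_Cl_of_rep DC h1 zero_le_one (le_refl _)
      obtain ⟨q', hq'Cl, hq'1, hq'2, hq'lam⟩ := ivt_cl DC (fun _ => 1) (fun _ => zero_le_one)
        hp'Cl hVkCl (mem_le_Vk DC hp'Cl) (θ := 5/2)
        (by rw [lam_ones, hrp']; norm_num) (by rw [lam_ones]; exact hVkC_ge)
      rw [lam_ones] at hq'lam
      have hq'C : q' ∈ C' := by
        rcases formC with hf | hf
        · rw [hf]; exact hq'Cl
        · have hp'ne : p' ≠ DC.V 0 := by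
            rw [hf] at hp'C; exact fun hh => hp'C.2 (by simp [hh])
          have hV0lt : rho (DC.V 0) < 1/2 := by
            rcases lt_or_eq_of_le hV0C_le with h | h
            · exact h
            · exact absurd (eq_of_le_rho (mem_le_V0 DC hp'Cl) (by rw [hrp', h])).symm hp'ne
          have hVkgt : 5/2 < rho (DC.V DC.k) := by linarith [hsymC]
          rw [hf]
          refine ⟨hq'Cl, ?_⟩
          simp only [Set.mem_insert_iff, Set.mem_singleton_iff]
          push_neg
          constructor
          · intro hh; rw [hh] at hq'lam; linarith
          · intro hh; rw [hh] at hq'lam; linarith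
      obtain ⟨n₀, hn₀, θ₀, h00, h01, hp'rep⟩ := rep_of_mem DC hkC hp'Cl
      obtain ⟨n₁, hn₁, θ₁, h10, h11, hq'rep⟩ := rep_of_mem DC hkC hq'Cl
      have hn01 : n₁ - n₀ ≤ n₁ := by omega
      have hPhi0 : Phi E p p' := by
        intro mm hmmE hpmm hrmm
        rw [hrp'] at hrmm
        have hpmm' : p = mm := eq_of_le_rho hpmm (by rw [hplam, hrmm])
        rw [← hpmm', hp'2]
        have h7 : p 2 = 1/2 - x0 := by
          linarith [hplam, hrhop, hpb0]
        rw [h7]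
        linarith
      have hp'a_pos : 0 < p' a := by rw [hp'a]; linarith
      have hPhiQ : Phi E p q' :=
        transport a b hcase DE DC formE formC hsubE hsubC hdisj
          hpE hpa_pos hpb0 hplam hp'C hp'a_pos hp'b hrp' hn₁ h10 h11 hq'rep hq'C
          n₁ n₀ θ₀ p' hn₀ h00 h01 hp'rep hp'C (fun m => le_refl _) hq'1 hn01 hPhi0
      have hfin := hPhiQ eA heA hp2 (by rw [hreA, hq'lam])
      have hq'S := hsubC hq'C
      have hb1 : q' 2 ≤ 1 := (hq'S.1 2).2
      rw [heA2] at hfin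
      linarith

end Main

end NoSCD

/-- The boundary of the unit cube in `ℝ³` with the open top and bottom faces removed
admits no partition into symmetric chains (Example 6.10). -/
theorem no_scd_cube_boundary_minus_faces :
    let P : Set (Fin 3 → ℝ) :=
      {x | (∀ i, 0 ≤ x i ∧ x i ≤ 1) ∧ (∃ i, x i = 0 ∨ x i = 1) ∧
           ¬((x 2 = 0 ∨ x 2 = 1) ∧ 0 < x 0 ∧ x 0 < 1 ∧ 0 < x 1 ∧ x 1 < 1)}
    ¬ ∃ 𝒞 : Set (Set (Fin 3 → ℝ)),
        (∀ Ch ∈ 𝒞, IsSymmetricChain3 Ch) ∧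
        ⋃₀ 𝒞 = P ∧
        (∀ Ch ∈ 𝒞, ∀ Ch' ∈ 𝒞, Ch ≠ Ch' → Disjoint Ch Ch') := by
  intro P
  rintro ⟨𝒞, hC, hU, hDj⟩
  have hU' : ⋃₀ 𝒞 = NoSCD.Sset := hU
  have heAS : (fun m => if m = (1 : Fin 3) then (1/2:ℝ) else 1) ∈ NoSCD.Sset := by
    refine ⟨?_, ⟨0, Or.inr (by norm_num)⟩, ?_⟩
    · intro i; fin_cases i <;> norm_num [Fin.ext_iff]
    · intro hcontra
      have h1 := hcontra.2.2.1
      norm_num at h1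
  have heBS : (fun m => if m = (0 : Fin 3) then (1/2:ℝ) else 1) ∈ NoSCD.Sset := by
    refine ⟨?_, ⟨1, Or.inr (by norm_num)⟩, ?_⟩
    · intro i; fin_cases i <;> norm_num [Fin.ext_iff]
    · intro hcontra
      have h1 := hcontra.2.2.2.2
      norm_num at h1
  obtain ⟨E, hE, heAE⟩ : ∃ E ∈ 𝒞, (fun m => if m = (1 : Fin 3) then (1/2:ℝ) else 1) ∈ E := by
    have : (fun m => if m = (1 : Fin 3) then (1/2:ℝ) else 1) ∈ ⋃₀ 𝒞 := by rw [hU']; exact heAS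
    exact Set.mem_sUnion.1 this
  obtain ⟨E', hE', heBE⟩ : ∃ E' ∈ 𝒞, (fun m => if m = (0 : Fin 3) then (1/2:ℝ) else 1) ∈ E' := by
    have : (fun m => if m = (0 : Fin 3) then (1/2:ℝ) else 1) ∈ ⋃₀ 𝒞 := by rw [hU']; exact heBS
    exact Set.mem_sUnion.1 this
  have jA : (fun m => if m = (2:Fin 3) then (1/2:ℝ) else 0) ∈ E :=
    NoSCD.main_aux 𝒞 hC hU' hDj 0 1 (Or.inl ⟨rfl, rfl⟩) hE heAE
  have jB : (fun m => if m = (2:Fin 3) then (1/2:ℝ) else 0) ∈ E' :=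
    NoSCD.main_aux 𝒞 hC hU' hDj 1 0 (Or.inr ⟨rfl, rfl⟩) hE' heBE
  have hEE' : E = E' := by
    by_contra hne
    exact Set.disjoint_left.1 (hDj E hE E' hE' hne) jA jB
  obtain ⟨DE, hsymE, formE⟩ := NoSCD.exists_CD (hC E hE)
  have h1 : (fun m => if m = (1 : Fin 3) then (1/2:ℝ) else 1) ∈ NoSCD.Cl DE :=
    NoSCD.ch_sub_cl DE E formE heAE
  have h2 : (fun m => if m = (0 : Fin 3) then (1/2:ℝ) else 1) ∈ NoSCD.Cl DE :=
    NoSCD.ch_sub_cl DE E formE (hEE' ▸ heBE)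
  rcases NoSCD.cl_comp DE h1 h2 with h | h
  · have := h 0
    norm_num at this
  · have := h 1
    norm_num at this
end
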